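/- Suppose f(·;y) is (L,α)-Hölder for each y, the cell A is contained in B(x₀, ν₂ρ^h), and for some x ∈ A and label ȳ one has Δ(x,ȳ) := f(x;ȳ) − min_{y} f(x;y) > 12·L(ν₂ρ^h)^α. Let B_h = L(ν₂ρ^h)^α and suppose the estimates satisfy |f̂(x₀;y) − f(x₀;y)| ≤ V for all y with V ≤ 2B_h. Let y* ∈ argmin_y f(x;y). Then f̂(x₀;y*) + B_h + V < f̂(x₀;ȳ) − B_h − V; hence the upper confidence bound for y* is strictly smaller than the lower confidence bound for ȳ, so ȳ is eliminated. -/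
import Mathlib


/-- Elimination of suboptimal labels: if `Δ(x,ȳ) > 12 B_h` with `B_h = L(ν₂ρ^h)^α`, the
estimates are `V`-accurate at the cell center and `V ≤ 2B_h`, then the upper confidence
bound of the optimal label `y*` is strictly below the lower confidence bound of `ȳ`. -/
theorem stmt5 {d M : ℕ} (f : EuclideanSpace ℝ (Fin d) → Fin M → ℝ)
    (L α ν₂ ρ V : ℝ) (h : ℕ) (hα0 : 0 < α) (hα1 : α ≤ 1) (hL : 0 < L)
    (hν₂ : 1 ≤ ν₂) (hρ0 : 0 < ρ) (hρ1 : ρ < 1) (hV : 0 ≤ V)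
    (hHolder : ∀ (y : Fin M) (x z : EuclideanSpace ℝ (Fin d)),
      |f x y - f z y| ≤ L * ‖x - z‖ ^ α)
    (A : Set (EuclideanSpace ℝ (Fin d))) (x₀ : EuclideanSpace ℝ (Fin d)) (hx₀ : x₀ ∈ A)
    (hA : A ⊆ Metric.ball x₀ (ν₂ * ρ ^ h))
    (x : EuclideanSpace ℝ (Fin d)) (hx : x ∈ A)
    (ystar ybar : Fin M) (hystar : ∀ y, f x ystar ≤ f x y)
    (hgap : 12 * (L * (ν₂ * ρ ^ h) ^ α) < f x ybar - f x ystar)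
    (fhat : Fin M → ℝ) (hfhat : ∀ y, |fhat y - f x₀ y| ≤ V)
    (hVrefine : V ≤ 2 * (L * (ν₂ * ρ ^ h) ^ α)) :
    fhat ystar + L * (ν₂ * ρ ^ h) ^ α + V < fhat ybar - L * (ν₂ * ρ ^ h) ^ α - V := by
  set B := L * (ν₂ * ρ ^ h) ^ α with hB
  have hball := hA hx
  have hdist : ‖x - x₀‖ ≤ ν₂ * ρ ^ h := by
    rw [← dist_eq_norm]
    exact le_of_lt (Metric.mem_ball.mp hball)
  have hpow : ‖x - x₀‖ ^ α ≤ (ν₂ * ρ ^ h) ^ α :=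
    Real.rpow_le_rpow (norm_nonneg _) hdist hα0.le
  have hBbound : ∀ y, |f x y - f x₀ y| ≤ B := fun y =>
    (hHolder y x x₀).trans (by
      rw [hB]
      exact mul_le_mul_of_nonneg_left hpow hL.le)
  have h1 := abs_le.mp (hBbound ystar)
  have h2 := abs_le.mp (hBbound ybar)
  have h3 := abs_le.mp (hfhat ystar)
  have h4 := abs_le.mp (hfhat ybar)
  have hBpos : 0 < B := by
    rw [hB]
    exact mul_pos hL (Real.rpow_pos_of_pos (by positivity) α)
  obtain ⟨h1a, h1b⟩ := h1
  obtain ⟨h2a, h2b⟩ := h2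
  obtain ⟨h3a, h3b⟩ := h3
  obtain ⟨h4a, h4b⟩ := h4
  linarith
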